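/- For a positive integer n, let G = ⟨a, x, y' | x^{2n+1} = 1, y'⁴ = 1, a²xⁿ = y'²⟩ and let N be the normal closure of x in G. Then G/N ≅ ⟨a, y' | y'⁴ = 1, a² = y'²⟩, which is nonabelian; in particular G/N is not isomorphic to ℤ/4. -/

import Mathlib

open FreeGroup

/-- Generators `a`, `x`, `y'` of the three-generator presentation. -/
def a3 : FreeGroup (Fin 3) := FreeGroup.of 0
def x3 : FreeGroup (Fin 3) := FreeGroup.of 1
def y3 : FreeGroup (Fin 3) := FreeGroup.of 2

/-- The relations of `G = ⟨a, x, y' | x^{2n+1} = 1, y'⁴ = 1, a²xⁿ = y'²⟩`. -/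
def relsG (n : ℕ) : Set (FreeGroup (Fin 3)) :=
  {x3 ^ (2 * n + 1), y3 ^ 4, a3 ^ 2 * x3 ^ n * (y3 ^ 2)⁻¹}

/-- Generators `a`, `y'` of the two-generator presentation. -/
def a2 : FreeGroup (Fin 2) := FreeGroup.of 0
def y2 : FreeGroup (Fin 2) := FreeGroup.of 1

/-- The relations of `⟨a, y' | y'⁴ = 1, a² = y'²⟩`. -/
def rels2 : Set (FreeGroup (Fin 2)) := {y2 ^ 4, a2 ^ 2 * (y2 ^ 2)⁻¹}

/-- The normal closure of `x` in `G`. -/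
abbrev N (n : ℕ) : Subgroup (PresentedGroup (relsG n)) :=
  Subgroup.normalClosure {(PresentedGroup.of 1 : PresentedGroup (relsG n))}

/-!
Killing `x` turns the relation `a²xⁿ = y'²` into `a² = y'²` and makes `x^{2n+1} = 1` vacuous, so
the two obvious maps `G/N → ⟨a, y' | y'⁴ = 1, a² = y'²⟩` and back are mutually inverse.
The two-generator group maps onto the quaternion group `Q₈` by `a ↦ j`, `y' ↦ i`, and `ij ≠ ji`,
so `G/N` is nonabelian and cannot be isomorphic to `ℤ/4`.
-/

section Presentations

variable {H : Type*} [Group H]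

noncomputable def rels2Lift (a y : H) (hy : y ^ 4 = 1) (hay : a ^ 2 = y ^ 2) :
    PresentedGroup rels2 →* H :=
  PresentedGroup.toGroup (f := ![a, y]) <| by
    simp [rels2, a2, y2, hy, hay]

noncomputable def relsGLift (n : ℕ) (a x y : H) (hx : x ^ (2 * n + 1) = 1) (hy : y ^ 4 = 1)
    (haxy : a ^ 2 * x ^ n = y ^ 2) : PresentedGroup (relsG n) →* H :=
  PresentedGroup.toGroup (f := ![a, x, y]) <| by
    simp [relsG, a3, x3, y3, hx, hy, haxy]

@[simp]
theorem rels2Lift_of (a y : H) (hy : y ^ 4 = 1) (hay : a ^ 2 = y ^ 2) (i : Fin 2) :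
    rels2Lift a y hy hay (PresentedGroup.of i) = ![a, y] i :=
  PresentedGroup.toGroup.of _

@[simp]
theorem relsGLift_of (n : ℕ) (a x y : H) (hx : x ^ (2 * n + 1) = 1) (hy : y ^ 4 = 1)
    (haxy : a ^ 2 * x ^ n = y ^ 2) (i : Fin 3) :
    relsGLift n a x y hx hy haxy (PresentedGroup.of i) = ![a, x, y] i :=
  PresentedGroup.toGroup.of _

end Presentations

theorem rels2_of_one_pow_four : (PresentedGroup.of 1 : PresentedGroup rels2) ^ 4 = 1 :=
  PresentedGroup.one_of_mem (x := y2 ^ 4) (by simp [rels2])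

theorem rels2_of_zero_sq :
    (PresentedGroup.of 0 : PresentedGroup rels2) ^ 2 = PresentedGroup.of 1 ^ 2 :=
  mul_inv_eq_one.mp <| PresentedGroup.one_of_mem (x := a2 ^ 2 * (y2 ^ 2)⁻¹) (by simp [rels2])

theorem relsG_of_two_pow_four (n : ℕ) :
    (PresentedGroup.of 2 : PresentedGroup (relsG n)) ^ 4 = 1 :=
  PresentedGroup.one_of_mem (x := y3 ^ 4) (by simp [relsG])

theorem relsG_of_zero_sq_mul_of_one_pow (n : ℕ) :
    (PresentedGroup.of 0 : PresentedGroup (relsG n)) ^ 2 * PresentedGroup.of 1 ^ n =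
      PresentedGroup.of 2 ^ 2 :=
  mul_inv_eq_one.mp <|
    PresentedGroup.one_of_mem (x := a3 ^ 2 * x3 ^ n * (y3 ^ 2)⁻¹) (by simp [relsG])

theorem mk_of_one_eq_one (n : ℕ) :
    ((PresentedGroup.of 1 : PresentedGroup (relsG n)) : PresentedGroup (relsG n) ⧸ N n) = 1 :=
  (QuotientGroup.eq_one_iff _).mpr <| Subgroup.subset_normalClosure rfl

noncomputable def killX (n : ℕ) : PresentedGroup (relsG n) →* PresentedGroup rels2 :=
  relsGLift n (PresentedGroup.of 0) 1 (PresentedGroup.of 1) (one_pow _) rels2_of_one_pow_four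
    (by rw [one_pow, mul_one, rels2_of_zero_sq])

noncomputable def quotientNToRels2 (n : ℕ) :
    PresentedGroup (relsG n) ⧸ N n →* PresentedGroup rels2 :=
  QuotientGroup.lift (N n) (killX n) <| Subgroup.normalClosure_le_normal <| by
    simp [killX]

noncomputable def rels2ToQuotientN (n : ℕ) :
    PresentedGroup rels2 →* PresentedGroup (relsG n) ⧸ N n :=
  rels2Lift (PresentedGroup.of 0 : PresentedGroup (relsG n))
    (PresentedGroup.of 2 : PresentedGroup (relsG n))
    (by rw [← QuotientGroup.mk_pow, relsG_of_two_pow_four, QuotientGroup.mk_one])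
    (by simpa [mk_of_one_eq_one] using
      congrArg (QuotientGroup.mk (s := N n)) (relsG_of_zero_sq_mul_of_one_pow n))

noncomputable def quotientNEquivRels2 (n : ℕ) :
    PresentedGroup (relsG n) ⧸ N n ≃* PresentedGroup rels2 :=
  MonoidHom.toMulEquiv (quotientNToRels2 n) (rels2ToQuotientN n)
    (QuotientGroup.monoidHom_ext _ <| PresentedGroup.ext fun i => by
      fin_cases i <;> simp [quotientNToRels2, rels2ToQuotientN, killX, mk_of_one_eq_one])
    (PresentedGroup.ext fun i => by
      fin_cases i <;> simp [quotientNToRels2, rels2ToQuotientN, killX])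

noncomputable def rels2ToQuaternion : PresentedGroup rels2 →* QuaternionGroup 2 :=
  rels2Lift (QuaternionGroup.xa 1) (QuaternionGroup.xa 0) (QuaternionGroup.xa_pow_four 0)
    (by simp only [QuaternionGroup.xa_sq])

theorem rels2_of_zero_mul_of_one_ne :
    (PresentedGroup.of 0 * PresentedGroup.of 1 : PresentedGroup rels2) ≠
      PresentedGroup.of 1 * PresentedGroup.of 0 := fun h => by
  have hQ := congrArg rels2ToQuaternion h
  simp only [_root_.map_mul, rels2ToQuaternion, rels2Lift_of] at hQ
  revert hQ
  decide

theorem not_nonempty_mulEquiv_of_mul_ne {G H : Type*} [Mul G] [CommMagma H] {g h : G}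
    (hgh : g * h ≠ h * g) : ¬ Nonempty (G ≃* H) := fun ⟨e⟩ =>
  hgh <| e.injective <| by rw [_root_.map_mul, _root_.map_mul, mul_comm]

theorem quotient_by_x_iso_and_nonabelian_general (n : ℕ) :
    Nonempty ((PresentedGroup (relsG n) ⧸ N n) ≃* PresentedGroup rels2) ∧
      (∃ g h : PresentedGroup (relsG n) ⧸ N n, g * h ≠ h * g) ∧
      ¬ Nonempty ((PresentedGroup (relsG n) ⧸ N n) ≃* Multiplicative (ZMod 4)) := by
  let e := quotientNEquivRels2 n
  have hne : e.symm (PresentedGroup.of 0) * e.symm (PresentedGroup.of 1) ≠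
      e.symm (PresentedGroup.of 1) * e.symm (PresentedGroup.of 0) := by
    simpa only [← _root_.map_mul, e.symm.injective.ne_iff] using rels2_of_zero_mul_of_one_ne
  exact ⟨⟨e⟩, ⟨_, _, hne⟩, not_nonempty_mulEquiv_of_mul_ne hne⟩

/-- For `n ≥ 1` let `G = ⟨a, x, y' | x^{2n+1} = 1, y'⁴ = 1, a²xⁿ = y'²⟩` and let `N` be the
normal closure of `x` in `G`. Then `G/N ≅ ⟨a, y' | y'⁴ = 1, a² = y'²⟩`, which is
nonabelian; in particular `G/N` is not isomorphic to `ℤ/4`. -/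
theorem quotient_by_x_iso_and_nonabelian (n : ℕ) (hn : 0 < n) :
    Nonempty ((PresentedGroup (relsG n) ⧸ N n) ≃* PresentedGroup rels2) ∧
      (∃ g h : PresentedGroup (relsG n) ⧸ N n, g * h ≠ h * g) ∧
      ¬ Nonempty ((PresentedGroup (relsG n) ⧸ N n) ≃* Multiplicative (ZMod 4)) :=
  quotient_by_x_iso_and_nonabelian_general n
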